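/- arXiv:2206.03857 — 4 statements merged into one kernel-verified Lean document; each statement's English description precedes it below -/
import Mathlib

section
/- (Proposition 1: VCG-nearest is not non-decreasing.) Let x* be the allocation giving {1} to bidder 1, {2} to bidder 2, nothing to bidder 3. For both β = 5 and β = 7, x* is the unique efficient allocation. The VCG-nearest payment of bidder 2 equals 3 when β = 5 and equals 5/2 when β = 7. Hence, although bidder 2's bid with β = 7 is coordinatewise at least his bid with β = 5 and the efficient allocation is unchanged, his VCG-nearest payment strictly decreases; therefore the VCG-nearest payment rule is not non-decreasing. -/
/-!
Every welfare bound is certified by additive prices on the two goods that dominate the bids of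
the bidders involved (weak LP duality), and is attained by an explicit allocation. This computes
all coalition values, so for `β ≤ 8` the core at `xstar` is cut out by `p 2 = 0`,
`max 6 β - 4 ≤ p 0 ≤ 4`, `2 ≤ p 1 ≤ 4` and `6 ≤ p 0 + p 1`, and the minimum-revenue core is the
segment `p 0 + p 1 = 6`. The VCG vector is `(max 6 β - 4, 2, 0)`; its projection onto the segment
is `p 0 = max 6 β / 2`, so bidder 2 (index `1`) pays `6 - max 6 β / 2`: `3` for `β = 5` but
`5 / 2` for `β = 7`. Prices `(4, 4)` also show that `xstar` is the unique efficient allocation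
for `β < 8`.
-/

open Finset

/-- An allocation assigns to each of the 3 bidders a subset of the 2 goods,
pairwise disjoint. -/
def IsAlloc (x : Fin 3 → Finset (Fin 2)) : Prop :=
  ∀ i j, i ≠ j → Disjoint (x i) (x j)

/-- An allocation is efficient if it maximizes reported social welfare. -/
def Efficient (b : Fin 3 → Finset (Fin 2) → ℝ) (x : Fin 3 → Finset (Fin 2)) : Prop :=
  IsAlloc x ∧ ∀ y, IsAlloc y → ∑ i, b i (y i) ≤ ∑ i, b i (x i)

/-- The VCG payment of bidder `i` at allocation `x`:
`max_{x'} ∑_{j≠i} b_j(x'_j) − ∑_{j≠i} b_j(x_j)`. -/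
noncomputable def vcgPayment (b : Fin 3 → Finset (Fin 2) → ℝ)
    (x : Fin 3 → Finset (Fin 2)) (i : Fin 3) : ℝ :=
  sSup {w : ℝ | ∃ y, IsAlloc y ∧ w = ∑ j ∈ Finset.univ.erase i, b j (y j)} -
    ∑ j ∈ Finset.univ.erase i, b j (x j)

/-- The core w.r.t. bids `b` and allocation `x`. -/
noncomputable def AuctionCore (b : Fin 3 → Finset (Fin 2) → ℝ)
    (x : Fin 3 → Finset (Fin 2)) : Set (Fin 3 → ℝ) :=
  {p | (∀ i, 0 ≤ p i ∧ p i ≤ b i (x i)) ∧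
    ∀ L : Finset (Fin 3),
      sSup {w : ℝ | ∃ y, IsAlloc y ∧ w = ∑ i ∈ L, b i (y i)} - ∑ i ∈ L, b i (x i) ≤
        ∑ i ∈ Lᶜ, p i}

/-- The minimum-revenue core: the core points minimizing total payment. -/
noncomputable def MinRevCore (b : Fin 3 → Finset (Fin 2) → ℝ)
    (x : Fin 3 → Finset (Fin 2)) : Set (Fin 3 → ℝ) :=
  {p ∈ AuctionCore b x | ∀ q ∈ AuctionCore b x, ∑ i, p i ≤ ∑ i, q i}

/-- `p` is a VCG-nearest payment vector: a point of the minimum-revenue core of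
minimum Euclidean distance to the VCG payment vector. -/
noncomputable def IsVCGNearest (b : Fin 3 → Finset (Fin 2) → ℝ)
    (x : Fin 3 → Finset (Fin 2)) (p : Fin 3 → ℝ) : Prop :=
  p ∈ MinRevCore b x ∧
    ∀ p' ∈ MinRevCore b x,
      ∑ i, (p i - vcgPayment b x i) ^ 2 ≤ ∑ i, (p' i - vcgPayment b x i) ^ 2

/-- A payment rule is non-decreasing if, whenever one bidder weakly raises his bid
on every bundle while all other bids are unchanged and an allocation `x` is
efficient in both cases, that bidder's payment at `x` does not decrease. -/
def NonDecreasing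
    (pr : (Fin 3 → Finset (Fin 2) → ℝ) → (Fin 3 → Finset (Fin 2)) → Fin 3 → ℝ) : Prop :=
  ∀ b b' : Fin 3 → Finset (Fin 2) → ℝ, ∀ i : Fin 3,
    (∀ j, j ≠ i → b' j = b j) → (∀ K, b i K ≤ b' i K) →
      ∀ x, Efficient b x → Efficient b' x → pr b x i ≤ pr b' x i

/-- The bids of Table 1 (goods 1,2 are encoded as 0,1). -/
def bids (β : ℝ) : Fin 3 → Finset (Fin 2) → ℝ := fun i K =>
  if i = 0 then (if K = {0} then 4 else 0)
  else if i = 1 then (if K = {1} then 4 else if K = {0, 1} then β else 0)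
  else (if K = {0} then 2 else if K = {1} then 2 else if K = {0, 1} then 6 else 0)

/-- The allocation giving good 1 to bidder 1, good 2 to bidder 2 and nothing to bidder 3. -/
def xstar : Fin 3 → Finset (Fin 2) := fun i =>
  if i = 0 then {0} else if i = 1 then {1} else ∅

theorem Finset.fin_two_cases (K : Finset (Fin 2)) :
    K = ∅ ∨ K = {0} ∨ K = {1} ∨ K = {0, 1} := by
  decide +revert

theorem Finset.fin_three_cases (L : Finset (Fin 3)) :
    L = ∅ ∨ L = {0} ∨ L = {1} ∨ L = {2} ∨ L = {0, 1} ∨ L = {0, 2} ∨ L = {1, 2} ∨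
      L = {0, 1, 2} := by
  decide +revert

theorem Finset.sum_compl_eq_sub {ι M : Type*} [Fintype ι] [DecidableEq ι] [AddCommGroup M]
    (s : Finset ι) (f : ι → M) : ∑ i ∈ sᶜ, f i = ∑ i, f i - ∑ i ∈ s, f i :=
  eq_sub_of_add_eq (sum_compl_add_sum s f)

noncomputable def coalitionValue (b : Fin 3 → Finset (Fin 2) → ℝ) (L : Finset (Fin 3)) : ℝ :=
  sSup {w : ℝ | ∃ y, IsAlloc y ∧ w = ∑ i ∈ L, b i (y i)}

theorem IsAlloc.pairwiseDisjoint {y : Fin 3 → Finset (Fin 2)} (hy : IsAlloc y)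
    (L : Finset (Fin 3)) : (L : Set (Fin 3)).PairwiseDisjoint y :=
  fun i _ j _ hij => hy i j hij

theorem isAlloc_empty : IsAlloc fun _ => ∅ :=
  fun _ _ _ => disjoint_empty_left _

section Welfare

variable {b : Fin 3 → Finset (Fin 2) → ℝ} {L : Finset (Fin 3)} {x y : Fin 3 → Finset (Fin 2)}

theorem mem_auctionCore_iff {p : Fin 3 → ℝ} :
    p ∈ AuctionCore b x ↔ (∀ i, 0 ≤ p i ∧ p i ≤ b i (x i)) ∧
      ∀ L, coalitionValue b L - ∑ i ∈ L, b i (x i) ≤ ∑ i ∈ Lᶜ, p i :=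
  Iff.rfl

theorem vcgPayment_eq {i : Fin 3} :
    vcgPayment b x i = coalitionValue b (univ.erase i) - ∑ j ∈ univ.erase i, b j (x j) :=
  rfl

theorem bddAbove_welfare : BddAbove {w : ℝ | ∃ y, IsAlloc y ∧ w = ∑ i ∈ L, b i (y i)} :=
  ((Set.finite_range fun y : Fin 3 → Finset (Fin 2) => ∑ i ∈ L, b i (y i)).subset
    (by rintro _ ⟨y, -, rfl⟩; exact ⟨y, rfl⟩)).bddAbove

theorem le_coalitionValue (hy : IsAlloc y) : ∑ i ∈ L, b i (y i) ≤ coalitionValue b L :=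
  le_csSup bddAbove_welfare ⟨y, hy, rfl⟩

theorem coalitionValue_le_iff {c : ℝ} :
    coalitionValue b L ≤ c ↔ ∀ y, IsAlloc y → ∑ i ∈ L, b i (y i) ≤ c := by
  rw [coalitionValue, csSup_le_iff bddAbove_welfare ⟨_, _, isAlloc_empty, rfl⟩]
  exact ⟨fun h y hy => h _ ⟨y, hy, rfl⟩, by rintro h _ ⟨y, hy, rfl⟩; exact h y hy⟩

theorem welfare_le_sum_price {p : Fin 2 → ℝ} (hp : ∀ g, 0 ≤ p g)
    (hb : ∀ i ∈ L, ∀ K, b i K ≤ ∑ g ∈ K, p g) (hy : IsAlloc y) :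
    ∑ i ∈ L, b i (y i) ≤ ∑ g, p g :=
  calc ∑ i ∈ L, b i (y i) ≤ ∑ i ∈ L, ∑ g ∈ y i, p g := sum_le_sum fun i hi => hb i hi (y i)
    _ = ∑ g ∈ L.biUnion y, p g := (sum_biUnion (hy.pairwiseDisjoint L)).symm
    _ ≤ ∑ g, p g := sum_le_univ_sum_of_nonneg hp

theorem coalitionValue_le_sum_price {p : Fin 2 → ℝ} (hp : ∀ g, 0 ≤ p g)
    (hb : ∀ i ∈ L, ∀ K, b i K ≤ ∑ g ∈ K, p g) : coalitionValue b L ≤ ∑ g, p g :=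
  coalitionValue_le_iff.2 fun _ hy => welfare_le_sum_price hp hb hy

theorem efficient_of_sum_price_le {p : Fin 2 → ℝ} (hp : ∀ g, 0 ≤ p g)
    (hb : ∀ i K, b i K ≤ ∑ g ∈ K, p g) (hx : IsAlloc x) (hwx : ∑ g, p g ≤ ∑ i, b i (x i)) :
    Efficient b x :=
  ⟨hx, fun _ hy => (welfare_le_sum_price hp (fun i _ => hb i) hy).trans hwx⟩

/-- An allocation reaching the price bound sells every good (prices are positive) and gives each
bidder a bundle priced exactly at his bid; `htight` places such bundles inside those of `z`. -/
theorem eq_of_sum_price_le_welfare {p : Fin 2 → ℝ} (hp : ∀ g, 0 < p g)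
    (hb : ∀ i K, b i K ≤ ∑ g ∈ K, p g) {z : Fin 3 → Finset (Fin 2)} (hz : IsAlloc z)
    (htight : ∀ i K, b i K = ∑ g ∈ K, p g → K ⊆ z i) (hx : IsAlloc x)
    (hwx : ∑ g, p g ≤ ∑ i, b i (x i)) : x = z := by
  have hle : ∀ i ∈ univ, b i (x i) ≤ ∑ g ∈ x i, p g := fun i _ => hb i (x i)
  have hsold : ∑ g ∈ univ.biUnion x, p g ≤ ∑ g, p g :=
    sum_le_univ_sum_of_nonneg fun g => (hp g).le
  rw [sum_biUnion (hx.pairwiseDisjoint univ)] at hsold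
  have hwelfare : ∑ i, b i (x i) ≤ ∑ i, ∑ g ∈ x i, p g := sum_le_sum hle
  have hsub : ∀ i, x i ⊆ z i := fun i =>
    htight i (x i) ((sum_eq_sum_iff_of_le hle).1 (by linarith) i (mem_univ i))
  have hcover : univ.biUnion x = univ := by
    by_contra hne
    obtain ⟨g, -, hg⟩ := exists_of_ssubset (ssubset_univ_iff.2 hne)
    have := sum_lt_sum_of_subset (subset_univ _) (mem_univ g) hg (hp g) fun j _ _ => (hp j).le
    rw [sum_biUnion (hx.pairwiseDisjoint univ)] at this
    linarith
  funext i
  refine Subset.antisymm (hsub i) fun g hg => ?_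
  obtain ⟨j, -, hgj⟩ := mem_biUnion.1 (hcover ▸ mem_univ g)
  obtain rfl : j = i := by
    by_contra hji
    exact disjoint_left.1 (hz j i hji) (hsub j hgj) hg
  exact hgj

end Welfare

section Table1

variable {β : ℝ}

theorem isAlloc_xstar : IsAlloc xstar := by
  unfold IsAlloc xstar
  decide

theorem bids_xstar_zero : bids β 0 (xstar 0) = 4 := by simp +decide [bids]

theorem bids_xstar_one : bids β 1 (xstar 1) = 4 := by simp +decide [bids]

theorem bids_xstar_two : bids β 2 (xstar 2) = 0 := by simp +decide [bids]

theorem bids_zero_le_sum_price {a c : ℝ} (ha : 4 ≤ a) (hc : 0 ≤ c) (K : Finset (Fin 2)) :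
    bids β 0 K ≤ ∑ g ∈ K, ![a, c] g := by
  rcases K.fin_two_cases with rfl | rfl | rfl | rfl <;> simp +decide [bids] <;> linarith

theorem bids_one_le_sum_price {a c : ℝ} (ha : 0 ≤ a) (hc : 4 ≤ c) (hac : β ≤ a + c)
    (K : Finset (Fin 2)) : bids β 1 K ≤ ∑ g ∈ K, ![a, c] g := by
  rcases K.fin_two_cases with rfl | rfl | rfl | rfl <;> simp +decide [bids] <;> linarith

theorem bids_two_le_sum_price {a c : ℝ} (ha : 2 ≤ a) (hc : 2 ≤ c) (hac : 6 ≤ a + c)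
    (K : Finset (Fin 2)) : bids β 2 K ≤ ∑ g ∈ K, ![a, c] g := by
  rcases K.fin_two_cases with rfl | rfl | rfl | rfl <;> simp +decide [bids] <;> linarith

theorem coalitionValue_bids_le {L : Finset (Fin 3)} {a c : ℝ} (ha : 0 ≤ a) (hc : 0 ≤ c)
    (h0 : 0 ∈ L → 4 ≤ a) (h1 : 1 ∈ L → 4 ≤ c ∧ β ≤ a + c)
    (h2 : 2 ∈ L → 2 ≤ a ∧ 2 ≤ c ∧ 6 ≤ a + c) : coalitionValue (bids β) L ≤ a + c := by
  have hp : ∀ g, 0 ≤ ![a, c] g := fun g => by fin_cases g <;> simpa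
  have := coalitionValue_le_sum_price (b := bids β) (L := L) hp fun i hi => by
    fin_cases i
    · exact bids_zero_le_sum_price (h0 hi) hc
    · exact bids_one_le_sum_price ha (h1 hi).1 (h1 hi).2
    · exact bids_two_le_sum_price (h2 hi).1 (h2 hi).2.1 (h2 hi).2.2
  simpa using this

theorem coalitionValue_bids_two : coalitionValue (bids β) {2} = 6 := by
  refine le_antisymm ?_ ?_
  · refine (coalitionValue_bids_le (L := {2}) (a := 3) (c := 3) (by norm_num) (by norm_num)
      (by simp) (by simp) fun _ => by norm_num).trans_eq (by norm_num)
  · refine le_of_eq_of_le ?_ (le_coalitionValue (y := ![∅, ∅, {0, 1}]) (by unfold IsAlloc; decide))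
    norm_num +decide [bids]

theorem coalitionValue_bids_zero_two : coalitionValue (bids β) {0, 2} = 6 := by
  refine le_antisymm ?_ ?_
  · refine (coalitionValue_bids_le (L := {0, 2}) (a := 4) (c := 2) (by norm_num) (by norm_num)
      (fun _ => le_rfl) (by simp) fun _ => by norm_num).trans_eq (by norm_num)
  · refine le_of_eq_of_le ?_ (le_coalitionValue (y := ![{0}, ∅, {1}]) (by unfold IsAlloc; decide))
    norm_num +decide [bids]

theorem coalitionValue_bids_one_two : coalitionValue (bids β) {1, 2} = max 6 β := by
  have h6 := le_max_left 6 β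
  refine le_antisymm ?_ (max_le ?_ ?_)
  · refine (coalitionValue_bids_le (L := {1, 2}) (a := max 6 β - 4) (c := 4) (by linarith)
      (by norm_num) (by simp) (fun _ => ⟨le_rfl, by linarith [le_max_right 6 β]⟩)
      fun _ => ⟨by linarith, by norm_num, by linarith⟩).trans_eq (by norm_num)
  · refine le_of_eq_of_le ?_ (le_coalitionValue (y := ![∅, {1}, {0}]) (by unfold IsAlloc; decide))
    norm_num +decide [bids]
  · refine le_of_eq_of_le ?_ (le_coalitionValue (y := ![∅, {0, 1}, ∅]) (by unfold IsAlloc; decide))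
    norm_num +decide [bids]

theorem coalitionValue_bids_zero_one (hβ : β ≤ 8) : coalitionValue (bids β) {0, 1} = 8 := by
  refine le_antisymm ?_ ?_
  · refine (coalitionValue_bids_le (L := {0, 1}) (a := 4) (c := 4) (by norm_num) (by norm_num)
      (fun _ => le_rfl) (fun _ => ⟨le_rfl, by linarith⟩) (by simp)).trans_eq (by norm_num)
  · refine le_of_eq_of_le ?_ (le_coalitionValue isAlloc_xstar)
    norm_num +decide [bids_xstar_zero, bids_xstar_one]

theorem coalitionValue_bids_sub_le_sum_compl (hβ : β ≤ 8) {p : Fin 3 → ℝ} (hp2 : p 2 = 0)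
    (hp0 : max 6 β - 4 ≤ p 0) (hp1 : 2 ≤ p 1) (hp01 : 6 ≤ p 0 + p 1) (L : Finset (Fin 3)) :
    coalitionValue (bids β) L - ∑ i ∈ L, bids β i (xstar i) ≤ ∑ i ∈ Lᶜ, p i := by
  have h6 := le_max_left 6 β
  rw [sum_compl_eq_sub, Fin.sum_univ_three]
  rcases L.fin_three_cases with rfl | rfl | rfl | rfl | rfl | rfl | rfl | rfl <;>
    simp +decide only [coalitionValue_bids_two, coalitionValue_bids_zero_two,
      coalitionValue_bids_one_two, coalitionValue_bids_zero_one hβ, bids_xstar_zero,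
      bids_xstar_one, bids_xstar_two, sum_insert, sum_singleton, sum_empty, mem_singleton,
      mem_insert]
  · linarith [coalitionValue_bids_le (β := β) (L := ∅) (a := 0) (c := 0) le_rfl le_rfl
      (by simp) (by simp) (by simp)]
  · linarith [coalitionValue_bids_le (β := β) (L := {0}) (a := 4) (c := 0) (by norm_num) le_rfl
      (fun _ => le_rfl) (by simp) (by simp)]
  · linarith [coalitionValue_bids_le (β := β) (L := {1}) (a := max 6 β - 4) (c := 4)
      (by linarith) (by norm_num) (by simp) (fun _ => ⟨le_rfl, by linarith [le_max_right 6 β]⟩)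
      (by simp)]
  iterate 4 · linarith
  · linarith [coalitionValue_bids_le (β := β) (L := {0, 1, 2}) (a := 4) (c := 4) (by norm_num)
      (by norm_num) (fun _ => le_rfl) (fun _ => ⟨le_rfl, by linarith⟩) fun _ => by norm_num]

theorem mem_auctionCore_bids_iff (hβ : β ≤ 8) {p : Fin 3 → ℝ} :
    p ∈ AuctionCore (bids β) xstar ↔
      p 2 = 0 ∧ max 6 β - 4 ≤ p 0 ∧ p 0 ≤ 4 ∧ 2 ≤ p 1 ∧ p 1 ≤ 4 ∧ 6 ≤ p 0 + p 1 := by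
  have h6 := le_max_left 6 β
  rw [mem_auctionCore_iff]
  constructor
  · rintro ⟨hind, hcoal⟩
    have h0 := hind 0
    have h1 := hind 1
    have h2 := hind 2
    have hv2 := hcoal {2}
    have hv02 := hcoal {0, 2}
    have hv12 := hcoal {1, 2}
    simp +decide only [coalitionValue_bids_two, coalitionValue_bids_zero_two,
      coalitionValue_bids_one_two, bids_xstar_zero, bids_xstar_one, bids_xstar_two,
      sum_compl_eq_sub, Fin.sum_univ_three, sum_insert, sum_singleton, mem_singleton]
      at h0 h1 h2 hv2 hv02 hv12
    exact ⟨by linarith, by linarith, by linarith, by linarith, by linarith, by linarith⟩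
  · rintro ⟨hp2, hp0, hp0', hp1, hp1', hp01⟩
    refine ⟨fun i => ?_, coalitionValue_bids_sub_le_sum_compl hβ hp2 hp0 hp1 hp01⟩
    fin_cases i <;>
      simp only [Fin.zero_eta, Fin.mk_one, Fin.reduceFinMk, bids_xstar_zero, bids_xstar_one,
        bids_xstar_two] <;>
      constructor <;> linarith

theorem mem_minRevCore_bids_iff (hβ : β ≤ 8) {p : Fin 3 → ℝ} :
    p ∈ MinRevCore (bids β) xstar ↔ p 2 = 0 ∧ max 6 β - 4 ≤ p 0 ∧ p 0 ≤ 4 ∧ p 1 = 6 - p 0 := by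
  have h6 := le_max_left 6 β
  have hcore : ![4, 2, 0] ∈ AuctionCore (bids β) xstar :=
    (mem_auctionCore_bids_iff hβ).2
      ⟨rfl, by norm_num [hβ], by simp, by simp, by norm_num, by norm_num⟩
  simp only [MinRevCore, mem_auctionCore_bids_iff hβ, Fin.sum_univ_three]
  constructor
  · rintro ⟨⟨hp2, hp0, hp0', -, -, hp01⟩, hmin⟩
    have : p 0 + p 1 + p 2 ≤ 4 + 2 + 0 := hmin _ ((mem_auctionCore_bids_iff hβ).1 hcore)
    exact ⟨hp2, hp0, hp0', by linarith⟩
  · rintro ⟨hp2, hp0, hp0', hp1⟩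
    refine ⟨⟨hp2, hp0, hp0', by linarith, by linarith, by linarith⟩, ?_⟩
    rintro q ⟨hq2, -, -, -, -, hq01⟩
    linarith

theorem vcgPayment_bids (hβ : β ≤ 8) : vcgPayment (bids β) xstar = ![max 6 β - 4, 2, 0] := by
  funext i
  match i with
  | 0 =>
    rw [vcgPayment_eq, show univ.erase (0 : Fin 3) = {1, 2} by decide, coalitionValue_bids_one_two]
    simp +decide [bids_xstar_one, bids_xstar_two]
  | 1 =>
    rw [vcgPayment_eq, show univ.erase (1 : Fin 3) = {0, 2} by decide, coalitionValue_bids_zero_two]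
    norm_num +decide [bids_xstar_zero, bids_xstar_two]
  | 2 =>
    rw [vcgPayment_eq, show univ.erase (2 : Fin 3) = {0, 1} by decide,
      coalitionValue_bids_zero_one hβ]
    norm_num +decide [bids_xstar_zero, bids_xstar_one, Matrix.cons_val_two]

theorem sum_sq_sub_vcgPayment_bids (hβ : β ≤ 8) {p : Fin 3 → ℝ}
    (hp : p ∈ MinRevCore (bids β) xstar) :
    ∑ i, (p i - vcgPayment (bids β) xstar i) ^ 2 =
      2 * (p 0 - max 6 β / 2) ^ 2 + (8 - max 6 β) ^ 2 / 2 := by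
  obtain ⟨hp2, -, -, hp1⟩ := (mem_minRevCore_bids_iff hβ).1 hp
  rw [Fin.sum_univ_three, vcgPayment_bids hβ, hp2, hp1]
  show (p 0 - (max 6 β - 4)) ^ 2 + (6 - p 0 - 2) ^ 2 + (0 - 0) ^ 2 = _
  ring

theorem isVCGNearest_bids_iff (hβ : β ≤ 8) {p : Fin 3 → ℝ} :
    IsVCGNearest (bids β) xstar p ↔ p = ![max 6 β / 2, 6 - max 6 β / 2, 0] := by
  have h6 := le_max_left 6 β
  have hmax := max_le (show (6 : ℝ) ≤ 8 by norm_num) hβ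
  have hc : ![max 6 β / 2, 6 - max 6 β / 2, 0] ∈ MinRevCore (bids β) xstar :=
    (mem_minRevCore_bids_iff hβ).2 ⟨rfl, by simp only [Matrix.cons_val_zero]; linarith,
      by simp only [Matrix.cons_val_zero]; linarith, by simp⟩
  constructor
  · rintro ⟨hp, hmin⟩
    have hle := hmin _ hc
    rw [sum_sq_sub_vcgPayment_bids hβ hp, sum_sq_sub_vcgPayment_bids hβ hc,
      Matrix.cons_val_zero, sub_self] at hle
    have hp0 : p 0 = max 6 β / 2 := by nlinarith [sq_nonneg (p 0 - max 6 β / 2)]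
    obtain ⟨hp2, -, -, hp1⟩ := (mem_minRevCore_bids_iff hβ).1 hp
    funext i
    match i with
    | 0 => exact hp0
    | 1 => simp [hp1, hp0]
    | 2 => exact hp2
  · rintro rfl
    refine ⟨hc, fun q hq => ?_⟩
    rw [sum_sq_sub_vcgPayment_bids hβ hc, sum_sq_sub_vcgPayment_bids hβ hq,
      Matrix.cons_val_zero, sub_self]
    nlinarith [sq_nonneg (q 0 - max 6 β / 2)]

theorem bids_le_sum_price_four (hβ : β ≤ 8) (i : Fin 3) (K : Finset (Fin 2)) :
    bids β i K ≤ ∑ g ∈ K, ![4, 4] g := by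
  fin_cases i
  · exact bids_zero_le_sum_price le_rfl (by norm_num) K
  · exact bids_one_le_sum_price (by norm_num) le_rfl (by linarith) K
  · exact bids_two_le_sum_price (by norm_num) (by norm_num) (by norm_num) K

theorem subset_xstar_of_bids_eq_sum_price_four (hβ : β < 8) (i : Fin 3) (K : Finset (Fin 2))
    (h : bids β i K = ∑ g ∈ K, ![4, 4] g) : K ⊆ xstar i := by
  fin_cases i <;> rcases K.fin_two_cases with rfl | rfl | rfl | rfl <;>
    simp +decide [bids] at h ⊢ <;> linarith

theorem sum_price_four_le_welfare_bids_xstar : ∑ g, ![(4 : ℝ), 4] g ≤ ∑ i, bids β i (xstar i) := by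
  simp [Fin.sum_univ_three, bids_xstar_zero, bids_xstar_one, bids_xstar_two]

theorem efficient_bids_xstar (hβ : β ≤ 8) : Efficient (bids β) xstar :=
  efficient_of_sum_price_le (fun g => by fin_cases g <;> simp) (bids_le_sum_price_four hβ)
    isAlloc_xstar sum_price_four_le_welfare_bids_xstar

theorem eq_xstar_of_efficient_bids (hβ : β < 8) {x : Fin 3 → Finset (Fin 2)}
    (hx : Efficient (bids β) x) : x = xstar :=
  eq_of_sum_price_le_welfare (fun g => by fin_cases g <;> simp) (bids_le_sum_price_four hβ.le)
    isAlloc_xstar (subset_xstar_of_bids_eq_sum_price_four hβ) hx.1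
    (sum_price_four_le_welfare_bids_xstar.trans (hx.2 xstar isAlloc_xstar))

theorem bids_eq_of_ne_one (β' : ℝ) {j : Fin 3} (hj : j ≠ 1) : bids β' j = bids β j := by
  funext K
  simp [bids, hj]

theorem bids_one_le_of_le {β' : ℝ} (h : β ≤ β') (K : Finset (Fin 2)) :
    bids β 1 K ≤ bids β' 1 K := by
  simp only [bids]
  split_ifs <;> simp_all

end Table1

/-- Proposition 1: VCG-nearest is not non-decreasing. For both β = 5 and β = 7,
`xstar` is the unique efficient allocation; the (unique) VCG-nearest payment of
bidder 2 is 3 for β = 5 and 5/2 for β = 7; bidder 2's bid with β = 7 dominates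
his bid with β = 5 coordinatewise; 5/2 < 3; hence no payment rule selecting
VCG-nearest payments can be non-decreasing. -/
theorem stmt_4 :
    (Efficient (bids 5) xstar ∧ ∀ x, Efficient (bids 5) x → x = xstar) ∧
    (Efficient (bids 7) xstar ∧ ∀ x, Efficient (bids 7) x → x = xstar) ∧
    (∃ p, IsVCGNearest (bids 5) xstar p ∧ (∀ p', IsVCGNearest (bids 5) xstar p' → p' = p) ∧
      p 1 = 3) ∧
    (∃ p, IsVCGNearest (bids 7) xstar p ∧ (∀ p', IsVCGNearest (bids 7) xstar p' → p' = p) ∧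
      p 1 = 5 / 2) ∧
    (∀ j, j ≠ (1 : Fin 3) → bids 7 j = bids 5 j) ∧
    (∀ K, bids 5 1 K ≤ bids 7 1 K) ∧
    ((5 / 2 : ℝ) < 3) ∧
    (∀ pr : (Fin 3 → Finset (Fin 2) → ℝ) → (Fin 3 → Finset (Fin 2)) → Fin 3 → ℝ,
      (∀ b x, Efficient b x → IsVCGNearest b x (pr b x)) → ¬ NonDecreasing pr) := by
  have eff5 := efficient_bids_xstar (β := 5) (by norm_num)
  have eff7 := efficient_bids_xstar (β := 7) (by norm_num)
  have near5 (p : Fin 3 → ℝ) : IsVCGNearest (bids 5) xstar p ↔ p = ![3, 3, 0] := by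
    rw [isVCGNearest_bids_iff (by norm_num)]
    norm_num
  have near7 (p : Fin 3 → ℝ) : IsVCGNearest (bids 7) xstar p ↔ p = ![7 / 2, 5 / 2, 0] := by
    rw [isVCGNearest_bids_iff (by norm_num)]
    norm_num
  have hothers (j : Fin 3) (hj : j ≠ 1) : bids 7 j = bids 5 j := bids_eq_of_ne_one 7 hj
  have hraise := bids_one_le_of_le (show (5 : ℝ) ≤ 7 by norm_num)
  refine ⟨⟨eff5, fun _ => eq_xstar_of_efficient_bids (by norm_num)⟩,
    ⟨eff7, fun _ => eq_xstar_of_efficient_bids (by norm_num)⟩,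
    ⟨_, (near5 _).2 rfl, fun p => (near5 p).1, rfl⟩,
    ⟨_, (near7 _).2 rfl, fun p => (near7 p).1, rfl⟩, hothers, hraise, by norm_num, ?_⟩
  intro pr hpr hmono
  have := hmono (bids 5) (bids 7) 1 hothers hraise xstar eff5 eff7
  rw [(near5 _).1 (hpr _ _ eff5), (near7 _).1 (hpr _ _ eff7)] at this
  norm_num at this
end

section
/- Let F = {p ∈ ℝ⁶ : 0 ≤ p₁ ≤ 5, 0 ≤ p₂ ≤ 5, 0 ≤ p₃ ≤ 4, 0 ≤ p₄ ≤ 1, 0 ≤ p₅ ≤ 1, 0 ≤ p₆ ≤ 1, p₁+p₂+p₄ ≥ 5, p₂+p₃+p₅ ≥ 5, p₁+p₃+p₆ ≥ 7, p₄+p₅+p₆ ≥ 2, p₂+p₃+p₄ ≥ 5}. Then the minimum of p₁+p₂+p₃+p₄+p₅+p₆ over F equals 19/2, attained for example at (3, 3/2, 3, 1/2, 1/2, 1). -/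
/-!
Each of the six winners occurs in exactly two of the core constraints of the losing bidders
7, 8, 9 and 10, so adding these four constraints gives `2 · (total payment) ≥ 5 + 5 + 7 + 2 = 19`.
The point `(3, 3/2, 3, 1/2, 1/2, 1)` satisfies all constraints with total exactly `19/2`.
-/

theorem nineteen_halves_le_sum_of_core {a b c d e f : ℝ} (h₁ : a + b + d ≥ 5) (h₂ : b + c + e ≥ 5)
    (h₃ : a + c + f ≥ 7) (h₄ : d + e + f ≥ 2) : 19 / 2 ≤ a + b + c + d + e + f := by
  linarith

-- Coordinates p₁,…,p₆ of the paper are `p 0`,…,`p 5`.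
/-- Minimizing total payment over the polytope `F` of individually rational
payment vectors satisfying the five core constraints gives minimum 19/2,
attained e.g. at (3, 3/2, 3, 1/2, 1/2, 1).
(Coordinates p₁,…,p₆ are encoded as p 0,…,p 5.) -/
theorem stmt_6 :
    let F : Set (Fin 6 → ℝ) :=
      {p | 0 ≤ p 0 ∧ p 0 ≤ 5 ∧ 0 ≤ p 1 ∧ p 1 ≤ 5 ∧ 0 ≤ p 2 ∧ p 2 ≤ 4 ∧
        0 ≤ p 3 ∧ p 3 ≤ 1 ∧ 0 ≤ p 4 ∧ p 4 ≤ 1 ∧ 0 ≤ p 5 ∧ p 5 ≤ 1 ∧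
        p 0 + p 1 + p 3 ≥ 5 ∧ p 1 + p 2 + p 4 ≥ 5 ∧ p 0 + p 2 + p 5 ≥ 7 ∧
        p 3 + p 4 + p 5 ≥ 2 ∧ p 1 + p 2 + p 3 ≥ 5}
    IsLeast ((fun p : Fin 6 → ℝ => p 0 + p 1 + p 2 + p 3 + p 4 + p 5) '' F) (19 / 2) ∧
      (![3, 3 / 2, 3, 1 / 2, 1 / 2, 1] : Fin 6 → ℝ) ∈ F ∧
      ((3 : ℝ) + 3 / 2 + 3 + 1 / 2 + 1 / 2 + 1 = 19 / 2) := by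
  intro F
  have hmem : (![3, 3 / 2, 3, 1 / 2, 1 / 2, 1] : Fin 6 → ℝ) ∈ F := by
    simp only [F, Set.mem_ofPred_eq, Matrix.cons_val]
    norm_num
  have hsum : (3 : ℝ) + 3 / 2 + 3 + 1 / 2 + 1 / 2 + 1 = 19 / 2 := by norm_num
  refine ⟨⟨⟨_, hmem, by simpa [Matrix.cons_val] using hsum⟩, ?_⟩, hmem, hsum⟩
  rintro _ ⟨p, ⟨-, -, -, -, -, -, -, -, -, -, -, -, h₁, h₂, h₃, h₄, -⟩, rfl⟩
  exact nineteen_halves_le_sum_of_core h₁ h₂ h₃ h₄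
end

section
/- Let S = {p ∈ ℝ⁶ : p ≥ 0 componentwise, p₁+p₂+p₄ = 5, p₂+p₃+p₅ = 5, p₁+p₃+p₆ = 7, p₄+p₅+p₆ = 2, p₂+p₃+p₄ = 5} and q = (2, 0, 1, 0, 0, 0). Then the unique minimizer over S of p ↦ ‖p − q‖₂ is (37/12, 16/12, 37/12, 7/12, 7/12, 10/12). -/
/-- VCG-nearest payments in the left scenario of Table 2: the unique point of
the minimum-revenue core `S` of minimum Euclidean (ℓ2) distance to the VCG point
`q = (2,0,1,0,0,0)` is `(37/12, 16/12, 37/12, 7/12, 7/12, 10/12)`.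
(Coordinates p₁,…,p₆ are encoded as p 0,…,p 5.) -/
theorem stmt_8 :
    let S : Set (Fin 6 → ℝ) :=
      {p | (∀ i, 0 ≤ p i) ∧
        p 0 + p 1 + p 3 = 5 ∧ p 1 + p 2 + p 4 = 5 ∧ p 0 + p 2 + p 5 = 7 ∧
        p 3 + p 4 + p 5 = 2 ∧ p 1 + p 2 + p 3 = 5}
    let q : Fin 6 → ℝ := ![2, 0, 1, 0, 0, 0]
    let d : (Fin 6 → ℝ) → (Fin 6 → ℝ) → ℝ := fun p p' => Real.sqrt (∑ i, (p i - p' i) ^ 2)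
    let pstar : Fin 6 → ℝ := ![37 / 12, 16 / 12, 37 / 12, 7 / 12, 7 / 12, 10 / 12]
    pstar ∈ S ∧ (∀ p ∈ S, d pstar q ≤ d p q) ∧
      (∀ p ∈ S, p ≠ pstar → d pstar q < d p q) := by
  intro S q d pstar
  have q0 : q 0 = 2 := rfl
  have q1 : q 1 = 0 := rfl
  have q2 : q 2 = 1 := rfl
  have q3 : q 3 = 0 := rfl
  have q4 : q 4 = 0 := rfl
  have q5 : q 5 = 0 := rfl
  have s0 : pstar 0 = 37/12 := rfl
  have s1 : pstar 1 = 16/12 := rfl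
  have s2 : pstar 2 = 37/12 := rfl
  have s3 : pstar 3 = 7/12 := rfl
  have s4 : pstar 4 = 7/12 := rfl
  have s5 : pstar 5 = 10/12 := rfl
  have hmem : pstar ∈ S := by
    refine ⟨fun i => ?_, ?_, ?_, ?_, ?_, ?_⟩
    · fin_cases i <;> norm_num [pstar]
    · rw [s0, s1, s3]; norm_num
    · rw [s1, s2, s4]; norm_num
    · rw [s0, s2, s5]; norm_num
    · rw [s3, s4, s5]; norm_num
    · rw [s1, s2, s3]; norm_num
  have hsum_star : ∑ i, (pstar i - q i) ^ 2 = 26 / 3 := by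
    rw [Fin.sum_univ_six, s0, s1, s2, s3, s4, s5, q0, q1, q2, q3, q4, q5]
    norm_num
  have key : ∀ p ∈ S, ∑ i, (p i - q i) ^ 2 = 12 * (p 3 - 7/12) ^ 2 + 26 / 3 := by
    rintro p ⟨_, h1, h2, h3, h4, h5⟩
    have e0 : p 0 = 5/2 + p 3 := by linarith
    have e1 : p 1 = 5/2 - 2 * p 3 := by linarith
    have e2 : p 2 = 5/2 + p 3 := by linarith
    have e4 : p 4 = p 3 := by linarith
    have e5 : p 5 = 2 - 2 * p 3 := by linarith
    rw [Fin.sum_univ_six, q0, q1, q2, q3, q4, q5, e0, e1, e2, e4, e5]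
    ring
  have hle : ∀ p ∈ S, ∑ i, (pstar i - q i) ^ 2 ≤ ∑ i, (p i - q i) ^ 2 := by
    intro p hp
    rw [hsum_star, key p hp]
    nlinarith [sq_nonneg (p 3 - 7/12)]
  refine ⟨hmem, ?_, ?_⟩
  · intro p hp
    exact Real.sqrt_le_sqrt (hle p hp)
  · intro p hp hne
    have hp3 : p 3 ≠ 7/12 := by
      intro h
      apply hne
      obtain ⟨_, h1, h2, h3, h4, h5⟩ := hp
      funext i
      fin_cases i
      · show p 0 = pstar 0; rw [s0]; linarith
      · show p 1 = pstar 1; rw [s1]; linarith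
      · show p 2 = pstar 2; rw [s2]; linarith
      · show p 3 = pstar 3; rw [s3]; linarith
      · show p 4 = pstar 4; rw [s4]; linarith
      · show p 5 = pstar 5; rw [s5]; linarith
    have hne0 : p 3 - 7/12 ≠ 0 := sub_ne_zero.mpr hp3
    have hlt : ∑ i, (pstar i - q i) ^ 2 < ∑ i, (p i - q i) ^ 2 := by
      rw [hsum_star, key p hp]
      have : 0 < (p 3 - 7/12) ^ 2 := by positivity
      nlinarith
    exact Real.sqrt_lt_sqrt (Finset.sum_nonneg fun i _ => sq_nonneg _) hlt
end

section
/- Let S = {p ∈ ℝ⁶ : p ≥ 0 componentwise, p₁+p₂+p₄ = 5, p₂+p₃+p₅ = 5, p₁+p₃+p₆ = 7, p₄+p₅+p₆ = 2, p₂+p₃+p₄ = 5} and q' = (1, 0, 1, 0, 0, 0). Then the unique minimizer over S of p ↦ ‖p − q'‖₂ is (3, 3/2, 3, 1/2, 1/2, 1); in particular its third coordinate 3 = 36/12 is strictly smaller than 37/12. -/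
private lemma eq_of_sq_le_zero {a b : ℝ} (h : (a - b) ^ 2 ≤ 0) : a = b := by
  have h0 : (a - b) ^ 2 = 0 := le_antisymm h (sq_nonneg _)
  have : a - b = 0 := (pow_eq_zero_iff two_ne_zero).mp h0
  linarith

private lemma key_identity (p : Fin 6 → ℝ)
    (h1 : p 0 + p 1 + p 3 = 5) (h2 : p 1 + p 2 + p 4 = 5)
    (h3 : p 0 + p 2 + p 5 = 7) (h4 : p 3 + p 4 + p 5 = 2) :
    (p 0 - 1) ^ 2 + (p 1 - 0) ^ 2 + (p 2 - 1) ^ 2 + (p 3 - 0) ^ 2 +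
      (p 4 - 0) ^ 2 + (p 5 - 0) ^ 2 =
    47 / 4 + ((p 0 - 3) ^ 2 + (p 1 - 3 / 2) ^ 2 + (p 2 - 3) ^ 2 +
      (p 3 - 1 / 2) ^ 2 + (p 4 - 1 / 2) ^ 2 + (p 5 - 1) ^ 2) := by
  linear_combination (3 / 2) * h1 + (3 / 2) * h2 + (5 / 2) * h3 - (1 / 2) * h4

/-- VCG-nearest payments in the right scenario of Table 2: the unique point of
the minimum-revenue core `S` of minimum Euclidean (ℓ2) distance to the VCG point
`q' = (1,0,1,0,0,0)` is `(3, 3/2, 3, 1/2, 1/2, 1)`; in particular its third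
coordinate 3 = 36/12 is strictly smaller than 37/12.
(Coordinates p₁,…,p₆ are encoded as p 0,…,p 5.) -/
theorem stmt_9 :
    let S : Set (Fin 6 → ℝ) :=
      {p | (∀ i, 0 ≤ p i) ∧
        p 0 + p 1 + p 3 = 5 ∧ p 1 + p 2 + p 4 = 5 ∧ p 0 + p 2 + p 5 = 7 ∧
        p 3 + p 4 + p 5 = 2 ∧ p 1 + p 2 + p 3 = 5}
    let q' : Fin 6 → ℝ := ![1, 0, 1, 0, 0, 0]
    let d : (Fin 6 → ℝ) → (Fin 6 → ℝ) → ℝ := fun p p' => Real.sqrt (∑ i, (p i - p' i) ^ 2)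
    let pstar : Fin 6 → ℝ := ![3, 3 / 2, 3, 1 / 2, 1 / 2, 1]
    pstar ∈ S ∧ (∀ p ∈ S, d pstar q' ≤ d p q') ∧
      (∀ p ∈ S, p ≠ pstar → d pstar q' < d p q') ∧
      pstar 2 = 36 / 12 ∧ (36 / 12 : ℝ) < 37 / 12 := by
  intro S q' d pstar
  have hs0 : pstar 0 = 3 := rfl
  have hs1 : pstar 1 = 3 / 2 := rfl
  have hs2 : pstar 2 = 3 := rfl
  have hs3 : pstar 3 = 1 / 2 := rfl
  have hs4 : pstar 4 = 1 / 2 := rfl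
  have hs5 : pstar 5 = 1 := rfl
  have hq0 : q' 0 = 1 := rfl
  have hq1 : q' 1 = 0 := rfl
  have hq2 : q' 2 = 1 := rfl
  have hq3 : q' 3 = 0 := rfl
  have hq4 : q' 4 = 0 := rfl
  have hq5 : q' 5 = 0 := rfl
  have hd : ∀ p : Fin 6 → ℝ, d p q' =
      Real.sqrt ((p 0 - 1) ^ 2 + (p 1 - 0) ^ 2 + (p 2 - 1) ^ 2 + (p 3 - 0) ^ 2 +
        (p 4 - 0) ^ 2 + (p 5 - 0) ^ 2) := by
    intro p
    simp only [d, Fin.sum_univ_six, hq0, hq1, hq2, hq3, hq4, hq5]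
  have hmem : pstar ∈ S := by
    refine ⟨fun i => ?_, by rw [hs0, hs1, hs3]; norm_num, by rw [hs1, hs2, hs4]; norm_num,
      by rw [hs0, hs2, hs5]; norm_num, by rw [hs3, hs4, hs5]; norm_num,
      by rw [hs1, hs2, hs3]; norm_num⟩
    fin_cases i <;> norm_num [pstar]
  have hself : d pstar q' = Real.sqrt (47 / 4) := by
    rw [hd, hs0, hs1, hs2, hs3, hs4, hs5]
    norm_num
  have hmain : ∀ p ∈ S, p ≠ pstar → d pstar q' < d p q' := by
    intro p hp hne
    obtain ⟨-, h1, h2, h3, h4, -⟩ := hp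
    have key := key_identity p h1 h2 h3 h4
    rw [hself, hd]
    apply Real.sqrt_lt_sqrt (by norm_num)
    rw [key]
    have hD : 0 < (p 0 - 3) ^ 2 + (p 1 - 3 / 2) ^ 2 + (p 2 - 3) ^ 2 +
        (p 3 - 1 / 2) ^ 2 + (p 4 - 1 / 2) ^ 2 + (p 5 - 1) ^ 2 := by
      by_contra hle
      push_neg at hle
      have e0 : p 0 = 3 := eq_of_sq_le_zero (by linarith [sq_nonneg (p 1 - 3 / 2), sq_nonneg (p 2 - 3), sq_nonneg (p 3 - 1 / 2), sq_nonneg (p 4 - 1 / 2), sq_nonneg (p 5 - 1)])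
      have e1 : p 1 = 3 / 2 := eq_of_sq_le_zero (by linarith [sq_nonneg (p 0 - 3), sq_nonneg (p 2 - 3), sq_nonneg (p 3 - 1 / 2), sq_nonneg (p 4 - 1 / 2), sq_nonneg (p 5 - 1)])
      have e2 : p 2 = 3 := eq_of_sq_le_zero (by linarith [sq_nonneg (p 0 - 3), sq_nonneg (p 1 - 3 / 2), sq_nonneg (p 3 - 1 / 2), sq_nonneg (p 4 - 1 / 2), sq_nonneg (p 5 - 1)])
      have e3 : p 3 = 1 / 2 := eq_of_sq_le_zero (by linarith [sq_nonneg (p 0 - 3), sq_nonneg (p 1 - 3 / 2), sq_nonneg (p 2 - 3), sq_nonneg (p 4 - 1 / 2), sq_nonneg (p 5 - 1)])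
      have e4 : p 4 = 1 / 2 := eq_of_sq_le_zero (by linarith [sq_nonneg (p 0 - 3), sq_nonneg (p 1 - 3 / 2), sq_nonneg (p 2 - 3), sq_nonneg (p 3 - 1 / 2), sq_nonneg (p 5 - 1)])
      have e5 : p 5 = 1 := eq_of_sq_le_zero (by linarith [sq_nonneg (p 0 - 3), sq_nonneg (p 1 - 3 / 2), sq_nonneg (p 2 - 3), sq_nonneg (p 3 - 1 / 2), sq_nonneg (p 4 - 1 / 2)])
      refine hne (funext fun i => ?_)
      fin_cases i
      · exact e0.trans hs0.symm
      · exact e1.trans hs1.symm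
      · exact e2.trans hs2.symm
      · exact e3.trans hs3.symm
      · exact e4.trans hs4.symm
      · exact e5.trans hs5.symm
    linarith
  refine ⟨hmem, ?_, hmain, by rw [hs2]; norm_num, by norm_num⟩
  intro p hp
  by_cases hpe : p = pstar
  · rw [hpe]
  · exact le_of_lt (hmain p hp hpe)
end
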